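/- arXiv:math/0702285 — 2 statements merged into one kernel-verified Lean document; each statement's English description precedes it below -/
import Mathlib

section
/- For 0 ≤ ℓ ≤ n, λ_{n,n-2,ℓ} = (-1)^ℓ (binom(n-2ℓ, 2) - ℓ), where binom(m,2) = m(m-1)/2 for any integer m (including negative m, interpreted as m(m-1)/2). -/
/-- The Krawtchouk number `λ_{n,k,ℓ} = Σ_i (-1)^i C(ℓ,i) C(n-ℓ,k-i)`. -/
def kraw (n k ℓ : ℕ) : ℤ :=
  ∑ i ∈ Finset.range (k + 1),
    (-1 : ℤ) ^ i * (ℓ.choose i : ℤ) * ((n - ℓ).choose (k - i) : ℤ)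

/-- `binom(m,2) = m(m-1)/2` for any integer `m` (the product is always even). -/
def choose2 (m : ℤ) : ℤ := m * (m - 1) / 2

lemma two_mul_choose2 (m : ℤ) : 2 * choose2 m = m * (m - 1) := by
  have h : (2:ℤ) ∣ m * (m - 1) := by
    rcases Int.even_or_odd m with h | h
    · exact Dvd.dvd.mul_right h.two_dvd _
    · exact Dvd.dvd.mul_left (by rcases h with ⟨k, hk⟩; exact ⟨k, by omega⟩) _
  exact Int.mul_ediv_cancel' h

lemma krawB (n k ℓ : ℕ) :
    kraw (n+1) (k+1) (ℓ+1) = kraw n (k+1) ℓ - kraw n k ℓ := by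
  unfold kraw
  have hs : n + 1 - (ℓ + 1) = n - ℓ := by omega
  rw [hs, Finset.sum_range_succ' _ (k+1),
    Finset.sum_range_succ' (fun i => (-1:ℤ)^i * (ℓ.choose i : ℤ) * ((n-ℓ).choose (k+1-i) : ℤ)) (k+1)]
  simp only [Nat.succ_sub_succ, Nat.choose_succ_succ, Nat.choose_zero_right, pow_succ,
    Nat.sub_zero, Nat.cast_add]
  rw [Finset.sum_congr rfl (fun x _ => by ring :
    ∀ x ∈ Finset.range (k+1), (-1:ℤ)^x * -1 * (↑(ℓ.choose x) + ↑(ℓ.choose (x+1))) * ↑((n-ℓ).choose (k-x))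
      = (-1:ℤ)^x * -1 * ↑(ℓ.choose (x+1)) * ↑((n-ℓ).choose (k-x)) - (-1:ℤ)^x * ↑(ℓ.choose x) * ↑((n-ℓ).choose (k-x))),
    Finset.sum_sub_distrib]
  ring

lemma krawA (n k ℓ : ℕ) (h : ℓ ≤ n) :
    kraw (n+1) (k+1) ℓ = kraw n (k+1) ℓ + kraw n k ℓ := by
  unfold kraw
  have hs : n + 1 - ℓ = (n - ℓ) + 1 := by omega
  rw [hs, Finset.sum_range_succ _ (k+1),
    Finset.sum_range_succ (fun i => (-1:ℤ)^i * (ℓ.choose i : ℤ) * ((n-ℓ).choose (k+1-i) : ℤ)) (k+1)]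
  have key : ∀ x ∈ Finset.range (k+1), (-1:ℤ)^x * ↑(ℓ.choose x) * ↑((n-ℓ+1).choose (k+1-x))
      = (-1:ℤ)^x * ↑(ℓ.choose x) * ↑((n-ℓ).choose (k+1-x)) + (-1:ℤ)^x * ↑(ℓ.choose x) * ↑((n-ℓ).choose (k-x)) := by
    intro x hx
    have hx' := Finset.mem_range.mp hx
    have e : k + 1 - x = (k - x) + 1 := by omega
    rw [e, Nat.choose_succ_succ]
    push_cast
    ring
  rw [Finset.sum_congr rfl key, Finset.sum_add_distrib]
  simp only [Nat.sub_self, Nat.choose_zero_right, Nat.cast_one]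
  ring

lemma kraw_rec (n k ℓ : ℕ) (h : ℓ ≤ n) :
    kraw (n+1) (k+1) (ℓ+1) = kraw (n+1) (k+1) ℓ - 2 * kraw n k ℓ := by
  rw [krawB n k ℓ, krawA n k ℓ h]; ring

lemma kraw_zero (n k : ℕ) : kraw n k 0 = (n.choose k : ℤ) := by
  unfold kraw
  rw [Finset.sum_eq_single 0]
  · simp
  · intro i _ hi
    obtain ⟨j, rfl⟩ : ∃ j, i = j + 1 := ⟨i - 1, by omega⟩
    simp
  · simp

lemma choose2_nat (n : ℕ) : choose2 (n : ℤ) = (n.choose 2 : ℤ) := by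
  have h := two_mul_choose2 (n : ℤ)
  have h2 : 2 * (n.choose 2 : ℤ) = (n : ℤ) * ((n : ℤ) - 1) := by
    rcases Nat.eq_zero_or_pos n with rfl | hn
    · simp
    · have : n.choose 2 * 2 = n * (n - 1) := by
        rw [Nat.choose_two_right]
        exact Nat.div_mul_cancel (Nat.even_mul_pred_self n).two_dvd
      have := congrArg (Nat.cast : ℕ → ℤ) this
      push_cast [hn] at this
      linarith
  linarith

theorem kraw_n_sub_two (n ℓ : ℕ) (hn : 2 ≤ n) (hℓ : ℓ ≤ n) :
    kraw n (n - 2) ℓ = (-1 : ℤ) ^ ℓ * (choose2 ((n : ℤ) - 2 * ℓ) - ℓ) := by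
  induction ℓ generalizing n with
  | zero =>
    rw [kraw_zero]
    have h1 : n.choose (n - 2) = n.choose 2 := Nat.choose_symm hn
    rw [h1]
    simp [← choose2_nat]
  | succ ℓ ih =>
    rcases Nat.lt_or_ge n 3 with h3 | h3
    · have hn2 : n = 2 := by omega
      subst hn2
      have hℓ0 : ℓ = 0 ∨ ℓ = 1 := by omega
      rcases hℓ0 with rfl | rfl <;>
        simp [kraw, choose2, Finset.sum_range_succ]
    · obtain ⟨m, rfl⟩ : ∃ m, n = m + 1 := ⟨n - 1, by omega⟩
      have hm : 2 ≤ m := by omega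
      have hℓm : ℓ ≤ m := by omega
      have e : m + 1 - 2 = (m - 2) + 1 := by omega
      rw [e, kraw_rec m (m - 2) ℓ hℓm, ← e, ih (m+1) (by omega) (by omega), ih m hm hℓm]
      have h1 := two_mul_choose2 ((m : ℤ) + 1 - 2 * ℓ)
      have h2 := two_mul_choose2 ((m : ℤ) - 2 * ℓ)
      have h3 := two_mul_choose2 ((m : ℤ) + 1 - 2 * (ℓ + 1))
      have e1 : ((m : ℤ) + 1 : ℤ) - 2 * ((ℓ : ℤ) + 1) = (m : ℤ) + 1 - 2 * (ℓ + 1) := by ring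
      push_cast
      have hc : choose2 ((m:ℤ) + 1 - 2*ℓ) - 2 * choose2 ((m:ℤ) - 2*ℓ)
          + choose2 ((m:ℤ) + 1 - 2*(ℓ+1)) = 1 := by
        have h4 : 2 * (choose2 ((m:ℤ) + 1 - 2*ℓ) - 2 * choose2 ((m:ℤ) - 2*ℓ)
            + choose2 ((m:ℤ) + 1 - 2*(ℓ+1))) = 2 := by linear_combination h1 - 2*h2 + h3
        linarith
      linear_combination ((-1:ℤ)^ℓ) * hc
end

section
/- For n = 2k+1 odd and m = (k+1) = (n+1)/2, the determinant of the m×m tridiagonal matrix with diagonal (X, X, …, X, X-m), superdiagonal (-1, -2, …, -(m-1)) and subdiagonal (-n, -(n-1), …, -(m+1)) equals Π_{ℓ=1}^{m} (X - (-1)^{ℓ+m}(2ℓ-1)). -/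
open Polynomial

noncomputable def ff (a b : ℕ) : ℚ[X] := (1 - X)^a * (1 + X)^b

lemma pow_pred_mul (p : ℚ[X]) (a : ℕ) : p * (C (a:ℚ) * p^(a-1)) = C (a:ℚ) * p^a := by
  cases a with
  | zero => simp
  | succ s => rw [Nat.succ_sub_one, pow_succ]; ring

lemma ode (a b : ℕ) : (1 - X^2) * derivative (ff a b)
    = (C ((b:ℚ) - a) - C ((a:ℚ)+b) * X) * ff a b := by
  have h1 : (1 - X : ℚ[X]) * (C (a:ℚ) * (1-X)^(a-1)) = C (a:ℚ) * (1-X)^a := pow_pred_mul _ a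
  have h2 : (1 + X : ℚ[X]) * (C (b:ℚ) * (1+X)^(b-1)) = C (b:ℚ) * (1+X)^b := pow_pred_mul _ b
  unfold ff
  rw [derivative_mul, derivative_pow, derivative_pow]
  simp only [derivative_sub, derivative_add, derivative_one, derivative_X, zero_sub, zero_add,
    mul_neg, mul_one, C_sub, C_add]
  linear_combination (-(1+X)*(1+X)^b) * h1 + ((1-X)*(1-X)^a) * h2

lemma natDegree_one_sub : (1 - X : ℚ[X]).natDegree = 1 := by
  have : (1 - X : ℚ[X]) = -(X - C 1) := by rw [C_1]; ring
  rw [this, natDegree_neg, natDegree_X_sub_C]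

lemma natDegree_one_add : (1 + X : ℚ[X]).natDegree = 1 := by
  have : (1 + X : ℚ[X]) = X + C 1 := by rw [C_1, add_comm]
  rw [this, natDegree_X_add_C]

lemma natDegree_ff (a b : ℕ) : (ff a b).natDegree = a + b := by
  have h1 : (1 - X : ℚ[X]) ≠ 0 := fun h => by simpa [h] using natDegree_one_sub
  have h2 : (1 + X : ℚ[X]) ≠ 0 := fun h => by simpa [h] using natDegree_one_add
  rw [ff, natDegree_mul (pow_ne_zero _ h1) (pow_ne_zero _ h2), natDegree_pow, natDegree_pow,
    natDegree_one_sub, natDegree_one_add, mul_one, mul_one]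

lemma reverse_one_sub : (1 - X : ℚ[X]).reverse = X - 1 := by
  rw [reverse, natDegree_one_sub, reflect_sub, reflect_one, reflect_one_X, pow_one]

lemma reverse_one_add : (1 + X : ℚ[X]).reverse = 1 + X := by
  rw [reverse, natDegree_one_add, reflect_add, reflect_one, reflect_one_X, pow_one, add_comm]

lemma reverse_pow_dom (p : ℚ[X]) (a : ℕ) : (p^a).reverse = p.reverse^a := by
  induction a with
  | zero => rw [pow_zero, pow_zero, ← C_1, reverse_C]
  | succ s ih => rw [pow_succ, reverse_mul_of_domain, ih, pow_succ]

lemma reverse_ff (a b : ℕ) (ha : Even a) : (ff a b).reverse = ff a b := by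
  rw [ff, reverse_mul_of_domain, reverse_pow_dom, reverse_pow_dom, reverse_one_sub,
    reverse_one_add]
  have : (X - 1 : ℚ[X])^a = (1 - X)^a := by
    rw [show (X - 1 : ℚ[X]) = -(1 - X) by ring, ha.neg_pow]
  rw [this]

lemma ff_coeff_symm (a b i : ℕ) (ha : Even a) (hi : i ≤ a + b) :
    (ff a b).coeff i = (ff a b).coeff (a + b - i) := by
  conv_lhs => rw [← reverse_ff a b ha]
  rw [coeff_reverse, natDegree_ff, revAt_le hi]

lemma ff_coeff_zero (a b : ℕ) : (ff a b).coeff 0 = 1 := by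
  simp [ff, coeff_zero_eq_eval_zero]

lemma coeffE0 (a b : ℕ) : (ff a b).coeff 1 = ((b:ℚ) - a) * (ff a b).coeff 0 := by
  have h := congrArg (fun p => coeff p 0) (ode a b)
  simp only [sub_mul, one_mul, coeff_sub, mul_assoc, coeff_C_mul, mul_coeff_zero,
    coeff_derivative, coeff_X_pow, coeff_X_zero, zero_mul, mul_zero, sub_zero] at h
  simpa using h

lemma coeffE (a b s : ℕ) :
    ((s:ℚ)+2) * (ff a b).coeff (s+2) - (s:ℚ) * (ff a b).coeff s
    = ((b:ℚ)-a) * (ff a b).coeff (s+1) - ((a:ℚ)+b) * (ff a b).coeff s := by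
  have h := congrArg (fun p => coeff p (s+1)) (ode a b)
  simp only [sub_mul, one_mul, coeff_sub, mul_assoc, coeff_C_mul, coeff_derivative,
    coeff_X_mul] at h
  have hx2 : (X^2 * derivative (ff a b)).coeff (s+1) = (s:ℚ) * (ff a b).coeff s := by
    cases s with
    | zero =>
      rw [coeff_X_pow_mul']
      simp
    | succ u =>
      rw [show u+1+1 = u + 2 from rfl, coeff_X_pow_mul, coeff_derivative]
      push_cast; ring
  rw [hx2] at h
  push_cast at h ⊢
  linear_combination h

noncomputable def Amat (k n : ℕ) : Matrix (Fin (k+1)) (Fin (k+1)) ℚ :=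
  Matrix.of fun i j => if (i:ℕ) = (j:ℕ) then (if (i:ℕ) = k then ((k:ℚ)+1) else 0)
    else if (i:ℕ)+1 = (j:ℕ) then (((i:ℕ):ℚ)+1)
    else if (j:ℕ)+1 = (i:ℕ) then ((n:ℚ) - ((j:ℕ):ℚ)) else 0

lemma rowsum (k n : ℕ) (g : ℕ → ℚ) (x : Fin (k+1)) :
    ∑ y, Amat k n x y * g ↑y
    = (if (x:ℕ) = k then ((k:ℚ)+1) * g k else (((x:ℕ):ℚ)+1) * g ((x:ℕ)+1))
      + (if (x:ℕ) = 0 then 0 else ((n:ℚ) - (((x:ℕ)-1 : ℕ):ℚ)) * g ((x:ℕ)-1)) := by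
  set i := (x:ℕ) with hidef
  have hi : i < k + 1 := x.2
  have hconv : ∑ y, Amat k n x y * g ↑y
      = ∑ t ∈ Finset.range (k+1),
        (fun t : ℕ => (if i = t then (if i = k then ((k:ℚ)+1) else 0)
          else if i+1 = t then ((i:ℚ)+1)
          else if t+1 = i then ((n:ℚ) - (t:ℚ)) else 0) * g t) t := by
    exact Fin.sum_univ_eq_sum_range (fun t : ℕ => (if i = t then (if i = k then ((k:ℚ)+1) else 0)
          else if i+1 = t then ((i:ℚ)+1)
          else if t+1 = i then ((n:ℚ) - (t:ℚ)) else 0) * g t) (k+1)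
  clear_value i
  rw [hconv]
  have P : ∀ t ∈ Finset.range (k+1),
      (if i = t then (if i = k then ((k:ℚ)+1) else 0)
          else if i+1 = t then ((i:ℚ)+1)
          else if t+1 = i then ((n:ℚ) - (t:ℚ)) else 0) * g t
      = (if t = i then (if i = k then ((k:ℚ)+1) else 0) * g t else 0)
        + ((if t = i+1 then ((i:ℚ)+1) * g t else 0)
        + (if t+1 = i then ((n:ℚ) - (t:ℚ)) * g t else 0)) := by
    intro t _
    split_ifs <;> (try (exfalso; omega)) <;> (subst_vars; push_cast; ring)
  rw [Finset.sum_congr rfl P, Finset.sum_add_distrib, Finset.sum_add_distrib,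
    Finset.sum_ite_eq' (Finset.range (k+1)) i, Finset.sum_ite_eq' (Finset.range (k+1)) (i+1)]
  have S3 : (∑ t ∈ Finset.range (k+1), if t+1 = i then ((n:ℚ) - (t:ℚ)) * g t else 0)
      = (if i = 0 then 0 else ((n:ℚ) - ((i-1 : ℕ):ℚ)) * g (i-1)) := by
    by_cases hi0 : i = 0
    · rw [if_pos hi0]
      refine Finset.sum_eq_zero fun t _ => ?_
      rw [if_neg (by omega)]
    · rw [if_neg hi0]
      have : ∀ t ∈ Finset.range (k+1), (if t+1 = i then ((n:ℚ) - (t:ℚ)) * g t else 0)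
          = (if t = i-1 then ((n:ℚ) - (t:ℚ)) * g t else 0) := by
        intro t _
        exact if_congr (by omega) rfl rfl
      rw [Finset.sum_congr rfl this, Finset.sum_ite_eq' (Finset.range (k+1)) (i-1),
        if_pos (Finset.mem_range.mpr (by omega))]
  rw [S3, if_pos (Finset.mem_range.mpr hi)]
  by_cases hik : i = k
  · rw [if_pos hik, if_pos hik, if_neg (by simp [Finset.mem_range]; omega), hik]
    ring
  · rw [if_neg hik, if_neg hik, if_pos (Finset.mem_range.mpr (by omega))]
    ring

lemma eval_charpoly_eq (k n : ℕ) (r : ℚ) :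
    eval r (Matrix.charpoly (Amat k n)) = (r • (1 : Matrix (Fin (k+1)) (Fin (k+1)) ℚ) - Amat k n).det := by
  rw [Matrix.charpoly, ← coe_evalRingHom, RingHom.map_det]
  congr 1
  ext x y
  by_cases h : x = y
  · subst h
    simp [Matrix.charmatrix_apply_eq, Matrix.map_apply, Matrix.sub_apply, Matrix.one_apply]
  · simp [Matrix.charmatrix_apply_ne _ _ _ h, Matrix.map_apply, Matrix.sub_apply,
      Matrix.one_apply_ne h, h]

lemma charpoly_root (k n : ℕ) (hk : 1 ≤ k) (hn : n = 2*k+1) (j : ℕ) (hje : Even j)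
    (hjn : j ≤ n) : eval ((n:ℚ) - 2*j) (Matrix.charpoly (Amat k n)) = 0 := by
  set lam : ℚ := (n:ℚ) - 2*j with hlam
  set c : ℕ → ℚ := fun i => (ff j (n-j)).coeff i with hc
  have hcast : ((n - j : ℕ) : ℚ) = (n:ℚ) - (j:ℚ) := by
    push_cast [hjn]; ring
  have hE0 : c 1 = lam * c 0 := by
    rw [hc]; simp only []
    rw [coeffE0 j (n-j), hcast, hlam]; ring_nf
  have hE : ∀ s : ℕ, ((s:ℚ)+2) * c (s+2) = lam * c (s+1) - ((n:ℚ) - s) * c s := by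
    intro s
    have h := coeffE j (n-j) s
    rw [hcast] at h
    rw [hc]; simp only []
    rw [hlam]; linarith [h]
  have hsym : c (k+1) = c k := by
    have h := ff_coeff_symm j (n-j) (k+1) hje (by omega)
    rw [hc]; simp only []
    rw [h, show j + (n - j) - (k+1) = k by omega]
  have hc0 : c 0 = 1 := ff_coeff_zero j (n-j)
  rw [eval_charpoly_eq]
  refine Matrix.exists_mulVec_eq_zero_iff.mp ⟨fun x => c ↑x, ?_, ?_⟩
  · intro h
    have h0 := congrFun h ⟨0, by omega⟩
    simp only [Pi.zero_apply] at h0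
    rw [hc0] at h0
    exact one_ne_zero h0
  · rw [Matrix.sub_mulVec, Matrix.smul_mulVec, Matrix.one_mulVec]
    funext x
    have hrow : (Amat k n).mulVec (fun x => c ↑x) x = ∑ y, Amat k n x y * c ↑y := rfl
    simp only [Pi.sub_apply, Pi.smul_apply, smul_eq_mul, Pi.zero_apply, hrow]
    rw [rowsum k n c x]
    set i := (x:ℕ) with hidef
    have hi : i < k + 1 := x.2
    clear_value i
    rcases Nat.eq_zero_or_pos i with hi0 | hipos
    · subst hi0
      rw [if_neg (show ¬((0:ℕ) = k) by omega), if_pos (rfl : (0:ℕ) = 0)]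
      push_cast
      linarith [hE0]
    · obtain ⟨s, rfl⟩ : ∃ s, i = s + 1 := ⟨i - 1, by omega⟩
      rw [if_neg (show ¬(s+1 = 0) by omega), show s + 1 - 1 = s from rfl]
      by_cases hik : s + 1 = k
      · rw [if_pos hik, ← hik]
        have h1 := hE s
        rw [show s + 2 = k + 1 by omega, hsym, ← hik] at h1
        push_cast at h1 ⊢
        linarith [h1]
      · rw [if_neg hik]
        have h1 := hE s
        rw [show s + 2 = s + 1 + 1 from rfl] at h1
        push_cast at h1 ⊢
        linarith [h1]

lemma charpoly_factors (k n : ℕ) (hk : 1 ≤ k) (hn : n = 2*k+1) :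
    Matrix.charpoly (Amat k n)
      = ∏ ℓ ∈ Finset.Icc 1 (k+1), (X - C (((-1:ℚ))^(ℓ+(k+1)) * (2*(ℓ:ℚ)-1))) := by
  set lam : ℕ → ℚ := fun ℓ => ((-1:ℚ))^(ℓ+(k+1)) * (2*(ℓ:ℚ)-1) with hlamdef
  have lam_eval : ∀ ℓ ∈ Finset.Icc 1 (k+1),
      (Even (ℓ+(k+1)) → lam ℓ = 2*(ℓ:ℚ)-1) ∧ (¬ Even (ℓ+(k+1)) → lam ℓ = 1-2*(ℓ:ℚ)) := by
    intro ℓ _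
    constructor
    · intro h; rw [hlamdef]; simp only [h.neg_one_pow]; ring
    · intro h; rw [hlamdef]; simp only [(Nat.not_even_iff_odd.mp h).neg_one_pow]; ring
  have hroot : ∀ ℓ ∈ Finset.Icc 1 (k+1), eval (lam ℓ) (Matrix.charpoly (Amat k n)) = 0 := by
    intro ℓ hℓ
    rw [Finset.mem_Icc] at hℓ
    by_cases hpar : Even (ℓ+(k+1))
    · have hj : lam ℓ = (n:ℚ) - 2*((k+1-ℓ : ℕ):ℚ) := by
        rw [(lam_eval ℓ (Finset.mem_Icc.mpr hℓ)).1 hpar]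
        push_cast [hℓ.2, hn]; ring
      rw [hj]
      exact charpoly_root k n hk hn (k+1-ℓ)
        (by rw [Nat.even_iff]; rw [Nat.even_iff] at hpar; omega) (by omega)
    · have hj : lam ℓ = (n:ℚ) - 2*((k+ℓ : ℕ):ℚ) := by
        rw [(lam_eval ℓ (Finset.mem_Icc.mpr hℓ)).2 hpar]
        push_cast [hn]; ring
      rw [hj]
      exact charpoly_root k n hk hn (k+ℓ)
        (by rw [Nat.even_iff]; rw [Nat.even_iff] at hpar; omega) (by omega)
  have hinj : ∀ ℓ₁ ∈ Finset.Icc 1 (k+1), ∀ ℓ₂ ∈ Finset.Icc 1 (k+1),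
      lam ℓ₁ = lam ℓ₂ → ℓ₁ = ℓ₂ := by
    intro a ha b hb hab
    rw [Finset.mem_Icc] at ha hb
    by_cases h1 : Even (a+(k+1)) <;> by_cases h2 : Even (b+(k+1))
    · rw [(lam_eval a (Finset.mem_Icc.mpr ha)).1 h1, (lam_eval b (Finset.mem_Icc.mpr hb)).1 h2] at hab
      have : (a:ℚ) = b := by linarith
      exact_mod_cast this
    · rw [(lam_eval a (Finset.mem_Icc.mpr ha)).1 h1, (lam_eval b (Finset.mem_Icc.mpr hb)).2 h2] at hab
      have : (a:ℚ) + b = 1 := by linarith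
      have : a + b = 1 := by exact_mod_cast this
      omega
    · rw [(lam_eval a (Finset.mem_Icc.mpr ha)).2 h1, (lam_eval b (Finset.mem_Icc.mpr hb)).1 h2] at hab
      have : (a:ℚ) + b = 1 := by linarith
      have : a + b = 1 := by exact_mod_cast this
      omega
    · rw [(lam_eval a (Finset.mem_Icc.mpr ha)).2 h1, (lam_eval b (Finset.mem_Icc.mpr hb)).2 h2] at hab
      have : (a:ℚ) = b := by linarith
      exact_mod_cast this
  have hdvd : (∏ ℓ ∈ Finset.Icc 1 (k+1), (X - C (lam ℓ))) ∣ Matrix.charpoly (Amat k n) := by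
    refine Finset.prod_dvd_of_coprime ?_ fun ℓ hℓ => dvd_iff_isRoot.mpr (hroot ℓ hℓ)
    intro a ha b hb hab
    exact isCoprime_X_sub_C_of_isUnit_sub
      ((sub_ne_zero.mpr fun h => hab (hinj a ha b hb h)).isUnit)
  have hQmonic : (∏ ℓ ∈ Finset.Icc 1 (k+1), (X - C (lam ℓ))).Monic :=
    monic_prod_of_monic _ _ fun ℓ _ => monic_X_sub_C _
  have hQdeg : (∏ ℓ ∈ Finset.Icc 1 (k+1), (X - C (lam ℓ))).natDegree = k+1 := by
    rw [natDegree_prod _ _ fun ℓ _ => X_sub_C_ne_zero _]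
    simp [natDegree_X_sub_C]
  have hPdeg : (Matrix.charpoly (Amat k n)).natDegree = k+1 := by
    rw [Matrix.charpoly_natDegree_eq_dim]
    simp
  exact eq_of_monic_of_dvd_of_natDegree_le hQmonic (Matrix.charpoly_monic _) hdvd
    (by rw [hQdeg, hPdeg])

theorem char_poly_distance_transform_odd (k n m : ℕ) (hk : 1 ≤ k)
    (hn : n = 2 * k + 1) (hm : m = k + 1) :
    (Matrix.of fun i j : Fin (k + 1) =>
        if (i : ℕ) = (j : ℕ) then
          (if (i : ℕ) = k then X - C (m : ℤ) else X)
        else if (i : ℕ) + 1 = (j : ℕ) then -C (((i : ℕ) + 1 : ℕ) : ℤ)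
        else if (j : ℕ) + 1 = (i : ℕ) then -C ((n : ℤ) - (j : ℕ))
        else 0).det
      = ∏ ℓ ∈ Finset.Icc 1 m, (X - C ((-1 : ℤ) ^ (ℓ + m) * (2 * ℓ - 1))) := by
  subst hn hm
  apply Polynomial.map_injective (Int.castRingHom ℚ) Int.cast_injective
  rw [Polynomial.map_prod, ← Polynomial.coe_mapRingHom, RingHom.map_det]
  have hmat : (Matrix.of fun i j : Fin (k + 1) =>
        if (i : ℕ) = (j : ℕ) then
          (if (i : ℕ) = k then X - C ((k+1 : ℕ) : ℤ) else X)
        else if (i : ℕ) + 1 = (j : ℕ) then -C (((i : ℕ) + 1 : ℕ) : ℤ)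
        else if (j : ℕ) + 1 = (i : ℕ) then -C (((2*k+1 : ℕ) : ℤ) - (j : ℕ))
        else 0).map (Polynomial.mapRingHom (Int.castRingHom ℚ))
      = Matrix.charmatrix (Amat k (2*k+1)) := by
    refine Matrix.ext fun i j => ?_
    rw [Matrix.map_apply, Matrix.of_apply, Polynomial.coe_mapRingHom]
    by_cases h : i = j
    · subst h
      rw [Matrix.charmatrix_apply_eq, if_pos rfl]
      have hA : Amat k (2*k+1) i i = if (i:ℕ) = k then ((k:ℚ)+1) else 0 := by
        rw [Amat, Matrix.of_apply, if_pos rfl]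
      rw [hA]
      by_cases hik : (i:ℕ) = k
      · rw [if_pos hik, if_pos hik, Polynomial.map_sub, Polynomial.map_X, Polynomial.map_C]
        simp only [Int.coe_castRingHom]
        congr 1
        push_cast
        ring
      · rw [if_neg hik, if_neg hik, Polynomial.map_X, C_0, sub_zero]
    · have hvy : ¬ ((i:ℕ) = (j:ℕ)) := fun hh => h (Fin.ext hh)
      rw [Matrix.charmatrix_apply_ne _ _ _ h, if_neg hvy]
      have hA : Amat k (2*k+1) i j
          = if (i:ℕ)+1 = (j:ℕ) then (((i:ℕ):ℚ)+1)
            else if (j:ℕ)+1 = (i:ℕ) then (((2*k+1 : ℕ):ℚ) - ((j:ℕ):ℚ)) else 0 := by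
        rw [Amat, Matrix.of_apply, if_neg hvy]
      rw [hA]
      by_cases h1 : (i:ℕ) + 1 = (j:ℕ)
      · rw [if_pos h1, if_pos h1, Polynomial.map_neg, Polynomial.map_C]
        simp only [Int.coe_castRingHom]
        congr 1
        push_cast
        ring
      · rw [if_neg h1, if_neg h1]
        by_cases h2 : (j:ℕ) + 1 = (i:ℕ)
        · rw [if_pos h2, if_pos h2, Polynomial.map_neg, Polynomial.map_C]
          simp only [Int.coe_castRingHom]
          congr 1
          push_cast
          ring
        · rw [if_neg h2, if_neg h2, Polynomial.map_zero, C_0, neg_zero]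
  rw [RingHom.mapMatrix_apply, hmat, ← Matrix.charpoly, charpoly_factors k (2*k+1) hk rfl]
  refine Finset.prod_congr rfl fun ℓ _ => ?_
  simp only [Polynomial.coe_mapRingHom, Polynomial.map_sub, Polynomial.map_X, Polynomial.map_C, Int.coe_castRingHom]
  congr 1
  push_cast
  ring
end
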